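/- Under the blanket assumptions, suppose g* is continuous on dom(g*). For ε > 0 define Q_ε: ℝ^n × ℝ^n → (−∞,+∞] as Q_ε(x,y) := Q(x,y) if η(x,y) ≥ ε and Q_ε(x,y) := +∞ otherwise (i.e. Q_ε is the sum of Q and the indicator function of {(x,y): η(x,y) ≥ ε}). If for every ε > 0 the function Q_ε is a KL function, then Q is a KL function. -/

import Mathlib

open Filter Topology Set
open scoped RealInnerProductSpace Pointwise NNReal

noncomputable section

namespace Paper

variable {E : Type*} [NormedAddCommGroup E] [InnerProductSpace ℝ E]

/-- The effective domain of an extended-real-valued function. -/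
def edom (φ : E → EReal) : Set E := {x | φ x ≠ ⊤}

/-- A function with values in `(-∞, +∞]` is proper if it is not identically `+∞`
and never takes the value `-∞`. -/
def Proper (φ : E → EReal) : Prop := (∃ x, φ x ≠ ⊤) ∧ ∀ x, φ x ≠ ⊥

/-- The Fréchet subdifferential of `φ` at `x`. -/
def frSubdiff (φ : E → EReal) (x : E) : Set E :=
  {y | φ x ≠ ⊤ ∧ 0 ≤ Filter.liminf
      (fun z : E => (φ z - φ x - ((⟪y, z - x⟫ : ℝ) : EReal)) * ((‖z - x‖⁻¹ : ℝ) : EReal))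
      (𝓝[≠] x)}

/-- The limiting (Mordukhovich) subdifferential of `φ` at `x`. -/
def limSubdiff (φ : E → EReal) (x : E) : Set E :=
  {y | ∃ u v : ℕ → E,
      Tendsto u atTop (𝓝 x) ∧ Tendsto (fun k => φ (u k)) atTop (𝓝 (φ x)) ∧
      (∀ k, v k ∈ frSubdiff φ (u k)) ∧ Tendsto v atTop (𝓝 y)}

/-- The convex subdifferential of a real-valued function. -/
def cvxSubdiff (g : E → ℝ) (x : E) : Set E :=
  {y | ∀ z, g x + ⟪y, z - x⟫ ≤ g z}

/-- The convex subdifferential of an extended-real-valued function. -/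
def cvxSubdiffE (φ : E → EReal) (x : E) : Set E :=
  {y | ∀ z, φ x + ((⟪y, z - x⟫ : ℝ) : EReal) ≤ φ z}

/-- The Fenchel conjugate of an extended-real-valued function. -/
def fconjE (φ : E → EReal) : E → EReal :=
  fun y => ⨆ x : E, (((⟪x, y⟫ : ℝ) : EReal) - φ x)

/-- The Fenchel conjugate of a real-valued function. -/
def fconj (g : E → ℝ) : E → EReal := fconjE (fun x => ((g x : ℝ) : EReal))

/-- `φ` satisfies the calmness condition at `x` relative to `A`. -/
def CalmAt (φ : E → EReal) (x : E) (A : Set E) : Prop :=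
  ∃ κ : ℝ, 0 < κ ∧ ∃ B ∈ 𝓝 x, ∀ u ∈ B ∩ A,
    φ u ≤ φ x + ((κ * ‖u - x‖ : ℝ) : EReal) ∧ φ x ≤ φ u + ((κ * ‖u - x‖ : ℝ) : EReal)

/-- `φ` satisfies the calmness condition on `A`. -/
def CalmOn (φ : E → EReal) (A : Set E) : Prop := ∀ x ∈ A, CalmAt φ x A

/-- The Kurdyka–Łojasiewicz property of `φ` at `x`. -/
def KLAt (φ : E → EReal) (x : E) : Prop :=
  ∃ ε > (0 : ℝ), ∃ δ > (0 : ℝ), ∃ ϕ ϕ' : ℝ → ℝ,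
    ϕ 0 = 0 ∧ ContinuousOn ϕ (Set.Ico 0 ε) ∧ ConcaveOn ℝ (Set.Ico 0 ε) ϕ ∧
    (∀ s ∈ Set.Ioo (0 : ℝ) ε, HasDerivAt ϕ (ϕ' s) s) ∧
    ContinuousOn ϕ' (Set.Ioo 0 ε) ∧ (∀ s ∈ Set.Ioo (0 : ℝ) ε, 0 < ϕ' s) ∧
    ∀ z ∈ Metric.ball x δ, φ x < φ z → φ z < φ x + (ε : EReal) →
      1 ≤ ENNReal.ofReal (ϕ' ((φ z).toReal - (φ x).toReal)) *
        EMetric.infEdist (0 : E) (limSubdiff φ z)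

/-- The KL property of `φ` at `x` with exponent `θ`. -/
def KLExpAt (φ : E → EReal) (x : E) (θ : ℝ) : Prop :=
  ∃ c > (0 : ℝ), ∃ ε > (0 : ℝ), ∃ δ > (0 : ℝ),
    ∀ z ∈ Metric.ball x δ, φ x < φ z → φ z < φ x + (ε : EReal) →
      ENNReal.ofReal (c * ((φ z).toReal - (φ x).toReal) ^ θ) ≤
        EMetric.infEdist (0 : E) (limSubdiff φ z)

/-- The (possibly multivalued) proximity operator of `φ`. -/
def proxSet (φ : E → EReal) (u : E) : Set E :=
  {z | ∀ w, φ z + ((‖z - u‖ ^ 2 / 2 : ℝ) : EReal) ≤ φ w + ((‖w - u‖ ^ 2 / 2 : ℝ) : EReal)}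

/-- A positive scaling of an extended-real-valued function. -/
def scaleE (α : ℝ) (φ : E → EReal) : E → EReal := fun x => ((α : ℝ) : EReal) * φ x

/-- `h` is locally Lipschitz differentiable on `s`. -/
def LocLipGradOn [CompleteSpace E] (h : E → ℝ) (s : Set E) : Prop :=
  (∀ x ∈ s, DifferentiableAt ℝ h x) ∧
  ∀ x ∈ s, ∃ U ∈ 𝓝 x, ∃ L : ℝ, ∀ u ∈ U ∩ s, ∀ v ∈ U ∩ s,
    ‖gradient h u - gradient h v‖ ≤ L * ‖u - v‖

/-- The numerator `ζ = f + h`. -/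
def zeta (f : E → EReal) (h : E → ℝ) (x : E) : EReal := f x + ((h x : ℝ) : EReal)

/-- `η(x,y) = ⟨x,y⟩ − g^*(y)`. -/
def eta (g : E → ℝ) (x y : E) : EReal := ((⟪x, y⟫ : ℝ) : EReal) - fconj g y

/-- The extended objective of the fractional problem. -/
def Ffun (f : E → EReal) (g h : E → ℝ) (x : E) : EReal :=
  if g x ≠ 0 ∧ f x ≠ ⊤ then ((((f x).toReal + h x) / g x : ℝ) : EReal) else ⊤

/-- The extended objective of the reformulated problem. -/
def Qfun (f : E → EReal) (g h : E → ℝ) (x y : E) : EReal :=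
  if f x ≠ ⊤ ∧ 0 < eta g x y then
    ((((f x).toReal + h x) / (eta g x y).toReal : ℝ) : EReal) else ⊤

/-- Pack a pair into the `ℓ²` product space. -/
def mk2 (x y : E) : WithLp 2 (E × E) := (WithLp.equiv 2 (E × E)).symm (x, y)

def pr1 (p : WithLp 2 (E × E)) : E := (WithLp.equiv 2 (E × E) p).1

def pr2 (p : WithLp 2 (E × E)) : E := (WithLp.equiv 2 (E × E) p).2

/-- `Q` as a function on the `ℓ²` product space. -/
def Qpair (f : E → EReal) (g h : E → ℝ) (p : WithLp 2 (E × E)) : EReal :=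
  Qfun f g h (pr1 p) (pr2 p)

/-- The blanket assumptions of the paper. -/
structure Blanket [CompleteSpace E] (f : E → EReal) (g h : E → ℝ) : Prop where
  f_proper : Proper f
  f_lsc : LowerSemicontinuous f
  f_cont : ContinuousOn f (edom f)
  f_bddBelow : ∃ m : ℝ, ∀ x, (m : EReal) ≤ f x
  h_lsc : LowerSemicontinuous h
  h_diff : LocLipGradOn h {x | g x ≠ 0}
  g_convex : ConvexOn ℝ Set.univ g
  g_nonneg : ∀ x, 0 ≤ g x
  omega_nonempty : ∃ x, g x ≠ 0
  zeta_nonneg : ∀ x, f x ≠ ⊤ → 0 ≤ zeta f h x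

/-- `x` is a critical point of `F`: `0 ∈ ∂̂f(x) + ∇h(x) − F(x)·∂g(x)`. -/
def IsCritF [CompleteSpace E] (f : E → EReal) (g h : E → ℝ) (x : E) : Prop :=
  g x ≠ 0 ∧ f x ≠ ⊤ ∧
  ∃ u ∈ frSubdiff f x, ∃ v ∈ cvxSubdiff g x,
    u + gradient h x - (Ffun f g h x).toReal • v = 0

/-- The level set `X = {x : F(x) ≤ F(x⁰)}`. -/
def lvlSet (f : E → EReal) (g h : E → ℝ) (x0 : E) : Set E :=
  {x | Ffun f g h x ≤ Ffun f g h x0}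

/-- The enlargement `X_{α̲}` of the level set. -/
def Xal (f : E → EReal) (g h : E → ℝ) (x0 : E) (αl : ℝ) : Set E :=
  {z | (Metric.infDist z (lvlSet f g h x0)) ^ 2 ≤ sSup (g '' lvlSet f g h x0) / αl}

/-- The compact set `𝒴 = ∪_{z ∈ X_{α̲}} ∂g(z)`. -/
def Yset (f : E → EReal) (g h : E → ℝ) (x0 : E) (αl : ℝ) : Set E :=
  ⋃ z ∈ Xal f g h x0 αl, cvxSubdiff g z

/-- The set `S = {(x,y) ∈ X × 𝒴 : η(x,y) > 0}`. -/
def Sset (f : E → EReal) (g h : E → ℝ) (x0 : E) (αl : ℝ) : Set (E × E) :=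
  {p | p.1 ∈ lvlSet f g h x0 ∧ p.2 ∈ Yset f g h x0 αl ∧ 0 < eta g p.1 p.2}

/-- The set of accumulation points of a sequence. -/
def accSet {X : Type*} [TopologicalSpace X] (pt : ℕ → X) : Set X :=
  {p | ∃ σ : ℕ → ℕ, StrictMono σ ∧ Tendsto (pt ∘ σ) atTop (𝓝 p)}

/-- A polyhedral function: its epigraph is a finite intersection of closed half-spaces. -/
def IsPolyhedralFn (φ : E → EReal) : Prop :=
  ∃ (m : ℕ) (w : Fin m → E) (c b : Fin m → ℝ),
    ∀ (x : E) (a : ℝ), (φ x ≤ (a : EReal) ↔ ∀ i, ⟪w i, x⟫ + c i * a ≤ b i)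


/-- The truncation `Q_ε` of `Q` to the region `η ≥ ε`. -/
def Qeps (f : E → EReal) (g h : E → ℝ) (ε : ℝ) (p : WithLp 2 (E × E)) : EReal :=
  if (ε : EReal) ≤ eta g (pr1 p) (pr2 p) then Qpair f g h p else ⊤

/-! At a point `p` of `dom Q` we have `η(p) > ε > 0` for some `ε`. Since `⟨x, y⟩` is
continuous and `g*` is continuous on its domain, near `p` either `η > ε` or `g* = +∞` (so `η = −∞`);
in both cases `Q = Q_ε`. The limiting subdifferential and the KL property only see a neighbourhood,
so the KL property passes from `Q_ε` to `Q` at `p`. Off `dom Q` the KL property holds vacuously. -/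

theorem frSubdiff_congr_of_eventuallyEq {φ ψ : E → EReal} {z : E} (h : φ =ᶠ[𝓝 z] ψ) :
    frSubdiff φ z = frSubdiff ψ z := by
  have hne : φ =ᶠ[𝓝[≠] z] ψ := h.filter_mono nhdsWithin_le_nhds
  ext y
  simp only [frSubdiff, Set.mem_ofPred_eq, h.eq_of_nhds]
  rw [Filter.liminf_congr (hne.mono fun w hw => by rw [hw])]

theorem limSubdiff_subset_of_eventuallyEq {φ ψ : E → EReal} {z : E} (h : φ =ᶠ[𝓝 z] ψ) :
    limSubdiff φ z ⊆ limSubdiff ψ z := by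
  rintro y ⟨u, v, hu, hφu, hv, hvy⟩
  obtain ⟨N, hN⟩ := (hu.eventually h.eventuallyEq_nhds).exists_forall_of_atTop
  have hshift := tendsto_add_atTop_nat N
  refine ⟨fun k => u (k + N), fun k => v (k + N), hu.comp hshift, ?_,
    fun k => ?_, hvy.comp hshift⟩
  · rw [← h.eq_of_nhds]
    refine (hφu.comp hshift).congr fun k => ?_
    exact (hN (k + N) (Nat.le_add_left N k)).eq_of_nhds
  · rw [← frSubdiff_congr_of_eventuallyEq (hN (k + N) (Nat.le_add_left N k))]
    exact hv (k + N)

theorem limSubdiff_congr_of_eventuallyEq {φ ψ : E → EReal} {z : E} (h : φ =ᶠ[𝓝 z] ψ) :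
    limSubdiff φ z = limSubdiff ψ z :=
  (limSubdiff_subset_of_eventuallyEq h).antisymm (limSubdiff_subset_of_eventuallyEq h.symm)

theorem KLAt.congr_of_eventuallyEq {φ ψ : E → EReal} {p : E} (hψ : KLAt ψ p)
    (h : φ =ᶠ[𝓝 p] ψ) : KLAt φ p := by
  obtain ⟨ε, hε, δ, hδ, ϕ, ϕ', h0, hc, hcc, hd, hc', hpos, hkl⟩ := hψ
  obtain ⟨r, hr, hball⟩ := Metric.mem_nhds_iff.1 h.eventuallyEq_nhds
  refine ⟨ε, hε, min δ r, lt_min hδ hr, ϕ, ϕ', h0, hc, hcc, hd, hc', hpos, fun z hz => ?_⟩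
  have hz' : φ =ᶠ[𝓝 z] ψ := hball (Metric.ball_subset_ball (min_le_right _ _) hz)
  rw [hz'.eq_of_nhds, h.eq_of_nhds, limSubdiff_congr_of_eventuallyEq hz']
  exact hkl z (Metric.ball_subset_ball (min_le_left _ _) hz)

theorem KLAt_of_eq_top {φ : E → EReal} {p : E} (hp : φ p = ⊤) : KLAt φ p := by
  refine ⟨1, one_pos, 1, one_pos, id, fun _ => 1, rfl, continuousOn_id,
    concaveOn_id (convex_Ico 0 1), fun s _ => hasDerivAt_id s, continuousOn_const,
    fun _ _ => one_pos, fun z _ hz _ => ?_⟩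
  rw [hp] at hz
  exact absurd hz not_top_lt

theorem eventually_eq_top_or_lt_of_continuousOn_edom {X : Type*} [TopologicalSpace X]
    {φ : X → EReal} (hφ : ContinuousOn φ {x | φ x ≠ ⊤}) {y : X} {a : EReal} (hy : φ y < a) :
    ∀ᶠ y' in 𝓝 y, φ y' = ⊤ ∨ φ y' < a := by
  have hlt : ∀ᶠ y' in 𝓝[edom φ] y, φ y' < a := hφ y hy.ne_top (isOpen_Iio.mem_nhds hy)
  filter_upwards [eventually_nhdsWithin_iff.1 hlt] with y' hy'
  by_cases htop : φ y' = ⊤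
  · exact Or.inl htop
  · exact Or.inr (hy' htop)

theorem fconj_ne_bot (g : E → ℝ) (y : E) : fconj g y ≠ ⊥ := by
  have hle : ((-(g 0) : ℝ) : EReal) ≤ fconj g y := by
    have := le_iSup (fun x : E => (((⟪x, y⟫ : ℝ) : EReal) - ((g x : ℝ) : EReal))) 0
    simpa [fconj, fconjE, inner_zero_left, ← EReal.coe_sub] using this
  exact fun hbot => by simp [hbot] at hle

theorem eventually_eta_eq_bot_or_lt {g : E → ℝ} (hg : ContinuousOn (fconj g) (edom (fconj g)))
    {x y : E} {a : ℝ} (ha : (a : EReal) < eta g x y) :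
    ∀ᶠ q : E × E in 𝓝 (x, y), eta g q.1 q.2 = ⊥ ∨ (a : EReal) < eta g q.1 q.2 := by
  have htop : fconj g y ≠ ⊤ := fun htop => by simp [eta, htop, EReal.sub_top] at ha
  obtain ⟨c, hc⟩ : ∃ c : ℝ, fconj g y = c :=
    ⟨_, (EReal.coe_toReal htop (fconj_ne_bot g y)).symm⟩
  rw [eta, hc, ← EReal.coe_sub, EReal.coe_lt_coe_iff] at ha
  set d := (⟪x, y⟫ - c - a) / 2 with hd
  have hconj : ∀ᶠ q : E × E in 𝓝 (x, y), fconj g q.2 = ⊤ ∨ fconj g q.2 < ((c + d : ℝ) : EReal) :=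
    continuous_snd.continuousAt.eventually
      (eventually_eq_top_or_lt_of_continuousOn_edom hg
        (by rw [hc]; exact_mod_cast (by linarith : c < c + d)))
  have hinner : ∀ᶠ q : E × E in 𝓝 (x, y), ⟪x, y⟫ - d < ⟪q.1, q.2⟫ :=
    (continuous_fst.inner continuous_snd).continuousAt.eventually
      (lt_mem_nhds (by simp only; linarith))
  filter_upwards [hconj, hinner] with q hq hq'
  rcases hq with htop' | hlt
  · exact Or.inl (by rw [eta, htop', EReal.sub_top])
  · obtain ⟨c', hc'⟩ : ∃ c' : ℝ, fconj g q.2 = c' :=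
      ⟨_, (EReal.coe_toReal hlt.ne_top (fconj_ne_bot g q.2)).symm⟩
    rw [hc', EReal.coe_lt_coe_iff] at hlt
    right
    rw [eta, hc', ← EReal.coe_sub, EReal.coe_lt_coe_iff]
    linarith

theorem Qeps_eq_Qpair {f : E → EReal} {g h : E → ℝ} {ε : ℝ} (hε : 0 < ε)
    {p : WithLp 2 (E × E)} (hp : eta g (pr1 p) (pr2 p) ≤ 0 ∨ (ε : EReal) ≤ eta g (pr1 p) (pr2 p)) :
    Qeps f g h ε p = Qpair f g h p := by
  rcases hp with hp | hp
  · have hε' : ¬ (ε : EReal) ≤ eta g (pr1 p) (pr2 p) :=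
      fun hle => (hle.trans hp).not_gt (by exact_mod_cast hε)
    rw [Qeps, if_neg hε', Qpair, Qfun, if_neg fun h => h.2.not_ge hp]
  · rw [Qeps, if_pos hp]

theorem Qpair_eventuallyEq_Qeps {f : E → EReal} {g h : E → ℝ}
    (hg : ContinuousOn (fconj g) (edom (fconj g))) {p : WithLp 2 (E × E)}
    (hp : Qpair f g h p ≠ ⊤) : ∃ ε > 0, Qpair f g h =ᶠ[𝓝 p] Qeps f g h ε := by
  have hη : 0 < eta g (pr1 p) (pr2 p) := by
    by_contra hη
    exact hp (by rw [Qpair, Qfun, if_neg fun h => hη h.2])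
  obtain ⟨ε, hε0, hεη⟩ := EReal.lt_iff_exists_real_btwn.1 hη
  have hε : 0 < ε := by exact_mod_cast hε0
  have hcont : Continuous fun q : WithLp 2 (E × E) => (pr1 q, pr2 q) :=
    WithLp.prod_continuous_ofLp _ _ _
  refine ⟨ε, hε, (hcont.continuousAt.eventually (eventually_eta_eq_bot_or_lt hg hεη)).mono
    fun q hq => (Qeps_eq_Qpair hε ?_).symm⟩
  rcases hq with hbot | hlt
  · exact Or.inl (hbot ▸ bot_le)
  · exact Or.inr hlt.le

theorem statement18_general {n : ℕ} (f : EuclideanSpace ℝ (Fin n) → EReal)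
    (g h : EuclideanSpace ℝ (Fin n) → ℝ)
    (hgstar : ContinuousOn (fconj g) (edom (fconj g)))
    (hKLε : ∀ ε : ℝ, 0 < ε →
      ∀ p : WithLp 2 (EuclideanSpace ℝ (Fin n) × EuclideanSpace ℝ (Fin n)),
        (limSubdiff (Qeps f g h ε) p).Nonempty → KLAt (Qeps f g h ε) p) :
    ∀ p : WithLp 2 (EuclideanSpace ℝ (Fin n) × EuclideanSpace ℝ (Fin n)),
      (limSubdiff (Qpair f g h) p).Nonempty → KLAt (Qpair f g h) p := by
  intro p hne
  by_cases hQ : Qpair f g h p = ⊤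
  · exact KLAt_of_eq_top hQ
  obtain ⟨ε, hε, hQε⟩ := Qpair_eventuallyEq_Qeps hgstar hQ
  have hneε : (limSubdiff (Qeps f g h ε) p).Nonempty := by
    rwa [← limSubdiff_congr_of_eventuallyEq hQε]
  exact (hKLε ε hε p hneε).congr_of_eventuallyEq hQε

/-- If every truncation `Q_ε` is a KL function, then so is `Q`. -/
theorem statement18 {n : ℕ} (f : EuclideanSpace ℝ (Fin n) → EReal)
    (g h : EuclideanSpace ℝ (Fin n) → ℝ) (hb : Blanket f g h)
    (hgstar : ContinuousOn (fconj g) (edom (fconj g)))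
    (hKLε : ∀ ε : ℝ, 0 < ε →
      ∀ p : WithLp 2 (EuclideanSpace ℝ (Fin n) × EuclideanSpace ℝ (Fin n)),
        (limSubdiff (Qeps f g h ε) p).Nonempty → KLAt (Qeps f g h ε) p) :
    ∀ p : WithLp 2 (EuclideanSpace ℝ (Fin n) × EuclideanSpace ℝ (Fin n)),
      (limSubdiff (Qpair f g h) p).Nonempty → KLAt (Qpair f g h) p :=
  statement18_general f g h hgstar hKLε

end Paper
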